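/- Let $S$ be a finite set of size $n \ge 2$, $R$ a finite range, and $\phi : R^4 \to \mathbb{R}$. For distinct $a,b \in S$ define ground factors $\phi(s(a), f(a,b), f(b,a), t(b))$ over assignments $s,t : S \to R$ and $f : \{(a,b): a\ne b\} \to R$. Then $\sum_{f} \prod_{a \ne b} \phi(s(a), f(a,b), f(b,a), t(b)) = \prod_{\{a,b\}, a \ne b} \left( \sum_{u,v \in R} \phi(s(a),u,v,t(b)) \phi(s(b),v,u,t(a)) \right)$, a product over unordered pairs. -/

import Mathlib

/-- Equivalence between two copies of the `<`-pairs and all distinct pairs. -/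
def pairEquiv {S : Type*} [LinearOrder S] :
    ({p : S × S // p.1 < p.2} ⊕ {p : S × S // p.1 < p.2}) ≃ {p : S × S // p.1 ≠ p.2} where
  toFun x :=
    match x with
    | .inl q => ⟨q.val, ne_of_lt q.prop⟩
    | .inr q => ⟨(q.val.2, q.val.1), ne_of_gt q.prop⟩
  invFun p :=
    if h : p.val.1 < p.val.2 then .inl ⟨p.val, h⟩
    else .inr ⟨(p.val.2, p.val.1), lt_of_le_of_ne (not_lt.mp h) (Ne.symm p.prop)⟩
  left_inv x := by
    rcases x with ⟨a, ha⟩ | ⟨a, ha⟩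
    · simp [ha]
    · have : ¬ a.2 < a.1 := not_lt.mpr ha.le
      simp [this]
  right_inv p := by
    by_cases h : p.val.1 < p.val.2
    · simp [h]
    · simp [h]

/-- Equivalence between assignments on distinct pairs and pairs of values on `<`-pairs. -/
def fnEquiv {S R : Type*} [LinearOrder S] :
    ({p : S × S // p.1 ≠ p.2} → R) ≃ ({p : S × S // p.1 < p.2} → R × R) :=
  ((Equiv.arrowCongr pairEquiv (Equiv.refl R)).symm.trans
      (Equiv.sumArrowEquivProdArrow _ _ R)).trans
    (Equiv.arrowProdEquivProdArrow _ (fun _ => R) (fun _ => R)).symm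

/-- Worked example of group inversion on g = φ(S(X), F(X,Y), F(Y,X), A(Y)) | X ≠ Y :
summing out all randvars F(a,b) factorizes into a product over unordered pairs. -/
theorem group_inversion_worked_example {S R : Type*} [Fintype S] [LinearOrder S]
    [Fintype R] (hS : 2 ≤ Fintype.card S) (φ : R → R → R → R → ℝ) (s t : S → R) :
    ∑ f : {p : S × S // p.1 ≠ p.2} → R,
        ∏ p : {p : S × S // p.1 ≠ p.2},
          φ (s p.val.1) (f p) (f ⟨(p.val.2, p.val.1), Ne.symm p.prop⟩) (t p.val.2)
      = ∏ p ∈ Finset.univ.filter (fun p : S × S => p.1 < p.2),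
          ∑ u : R, ∑ v : R, φ (s p.1) u v (t p.2) * φ (s p.2) v u (t p.1) := by
  classical
  -- reindex the sum through fnEquiv
  rw [← Equiv.sum_comp (fnEquiv (S := S) (R := R)).symm]
  have key : ∀ h : {p : S × S // p.1 < p.2} → R × R,
      (∏ p : {p : S × S // p.1 ≠ p.2},
          φ (s p.val.1) ((fnEquiv.symm h) p)
            ((fnEquiv.symm h) ⟨(p.val.2, p.val.1), Ne.symm p.prop⟩) (t p.val.2))
        = ∏ q : {p : S × S // p.1 < p.2},
            φ (s q.val.1) (h q).1 (h q).2 (t q.val.2) *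
              φ (s q.val.2) (h q).2 (h q).1 (t q.val.1) := by
    intro h
    have hval : ∀ p : {p : S × S // p.1 ≠ p.2},
        (fnEquiv.symm h) p =
          if hc : p.val.1 < p.val.2 then (h ⟨p.val, hc⟩).1
          else (h ⟨(p.val.2, p.val.1),
            lt_of_le_of_ne (not_lt.mp hc) (Ne.symm p.prop)⟩).2 := by
      intro p
      simp only [fnEquiv, pairEquiv, Equiv.trans_apply, Equiv.symm_trans_apply,
        Equiv.symm_symm, Equiv.arrowCongr_apply, Equiv.arrowProdEquivProdArrow,
        Equiv.sumArrowEquivProdArrow, Equiv.coe_fn_mk, Equiv.coe_fn_symm_mk]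
      by_cases hc : p.val.1 < p.val.2 <;> simp [hc]
    rw [← Equiv.prod_comp (pairEquiv (S := S)), Fintype.prod_sum_type,
      ← Finset.prod_mul_distrib]
    refine Finset.prod_congr rfl fun q _ => ?_
    have h1 : (pairEquiv (Sum.inl q) : {p : S × S // p.1 ≠ p.2}).val = q.val := rfl
    have h2 : (pairEquiv (Sum.inr q) : {p : S × S // p.1 ≠ p.2}).val
        = (q.val.2, q.val.1) := rfl
    have hlt := q.prop
    have hnlt : ¬ q.val.2 < q.val.1 := not_lt.mpr hlt.le
    simp only [hval, h1, h2]
    simp [hlt, hnlt]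
  simp only [key]
  have interchange := Finset.prod_univ_sum
    (fun _ : {p : S × S // p.1 < p.2} => (Finset.univ : Finset (R × R)))
    (fun q (y : R × R) => φ (s q.val.1) y.1 y.2 (t q.val.2) * φ (s q.val.2) y.2 y.1 (t q.val.1))
  rw [Fintype.piFinset_univ] at interchange
  rw [← interchange]
  simp only [Fintype.sum_prod_type]
  exact (Finset.prod_subtype (Finset.univ.filter (fun p : S × S => p.1 < p.2)) (by simp)
    (fun p => ∑ u : R, ∑ v : R, φ (s p.1) u v (t p.2) * φ (s p.2) v u (t p.1))).symm
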